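/- In the single-seller pricing rule, a losing buyer cannot gain by overbidding: if the truthful valuation v satisfies v·r < b1·r1 where b1·r1 is the current highest total bid, and by bidding b ≥ b1 the buyer becomes the winner charged p = max t (b1·(r1/r)), then its utility (v − p)·r ≤ 0. -/
import Mathlib

theorem losing_buyer_cannot_gain_by_overbidding
    (v b b1 t : ℝ) (r r1 : ℝ) (hr : 0 < r) (hr1 : 0 < r1)
    (ht : t ≤ b1) (hlose : v * r < b1 * r1) (hb : b ≥ b1)
    (p : ℝ) (hp : p = max t (b1 * (r1 / r))) :
    (v - p) * r ≤ 0 := by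
  have h1 : v ≤ b1 * (r1 / r) := by
    rw [mul_div_assoc', le_div_iff₀ hr]
    linarith
  have h2 : v ≤ p := by
    rw [hp]; exact h1.trans (le_max_right _ _)
  nlinarith
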